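/- On R^6, define P with nonzero entries P^{13} = p13, P^{25} = p25, P^{46} = p46 and P' with nonzero entries P'^{13} = a31 x1 + a33 x3, P'^{25} = b52 x2 + b55 x5, P'^{46} = d64 x4 + d66 x6 (real constants). Then P, P' are compatible Poisson structures, and if p13 p25 p46 ≠ 0 the functions H1 = u + v + w, H2 = (u^2+v^2+w^2)/2, H3 = (u^3+v^3+w^3)/3 with u = (a31 x1 + a33 x3)/p13, v = (b52 x2 + b55 x5)/p25, w = (d64 x4 + d66 x6)/p46 are pairwise in bi-involution: {Hi,Hj} = {Hi,Hj}' = 0. -/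

import Mathlib

/-!
Both bivectors are block diagonal for the coordinate pairs `(x₁, x₃)`, `(x₂, x₅)`, `(x₄, x₆)`,
and each block coefficient depends only on the coordinates of its own block. A term
`P^{ρλ} ∂_ρ Q^{μν}` of a (mixed) Schouten bracket can therefore survive only when `λ, μ, ν` lie in a
single block; blocks have two elements, so two of the indices coincide and skew-symmetry makes
the cyclic sum cancel.

Each `Hₙ` is a sum `∑ₖ φₙ(uₖ)` with `u₁ = u, u₂ = v, u₃ = w` depending on block `k` alone, so on
every block the gradients of `Hᵢ` and `Hⱼ` are both multiples of `∇uₖ`, and a block-diagonal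
skew form pairs them to zero.
-/

open scoped BigOperators

noncomputable def pd {m : ℕ} (μ : Fin m) (f : (Fin m → ℝ) → ℝ) (x : Fin m → ℝ) : ℝ :=
  fderiv ℝ f x (Pi.single μ 1)

/-- Poisson bracket associated to a bivector field `P`. -/
noncomputable def pbrk {m : ℕ} (P : (Fin m → ℝ) → Fin m → Fin m → ℝ)
    (f g : (Fin m → ℝ) → ℝ) (x : Fin m → ℝ) : ℝ :=
  ∑ μ, ∑ ν, P x μ ν * pd μ f x * pd ν g x

/-- Schouten bracket `[P,P]^{λμν}`. -/
noncomputable def schouten {m : ℕ} (P : (Fin m → ℝ) → Fin m → Fin m → ℝ)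
    (l μ ν : Fin m) (x : Fin m → ℝ) : ℝ :=
  ∑ ρ, (P x ρ l * pd ρ (fun y => P y μ ν) x
      + P x ρ ν * pd ρ (fun y => P y l μ) x
      + P x ρ μ * pd ρ (fun y => P y ν l) x)

/-- Mixed Schouten bracket `[P,Q]^{λμν}`. -/
noncomputable def schoutenMixed {m : ℕ} (P Q : (Fin m → ℝ) → Fin m → Fin m → ℝ)
    (l μ ν : Fin m) (x : Fin m → ℝ) : ℝ :=
  ∑ ρ, (P x ρ l * pd ρ (fun y => Q y μ ν) x + Q x ρ l * pd ρ (fun y => P y μ ν) x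
      + P x ρ ν * pd ρ (fun y => Q y l μ) x + Q x ρ ν * pd ρ (fun y => P y l μ) x
      + P x ρ μ * pd ρ (fun y => Q y ν l) x + Q x ρ μ * pd ρ (fun y => P y ν l) x)

/-- The Poisson bivector `P` on the nilpotent group `A_{6,24}`. -/
noncomputable def P624 (p13 p25 p46 : ℝ) : (Fin 6 → ℝ) → Fin 6 → Fin 6 → ℝ :=
  fun _ μ ν =>
    !![0, 0, p13, 0, 0, 0;
       0, 0, 0, 0, p25, 0;
       -p13, 0, 0, 0, 0, 0;
       0, 0, 0, 0, 0, p46;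
       0, -p25, 0, 0, 0, 0;
       0, 0, 0, -p46, 0, 0] μ ν

/-- The Poisson bivector `P'` on the nilpotent group `A_{6,24}`. -/
noncomputable def P624' (a31 a33 b52 b55 d64 d66 : ℝ) : (Fin 6 → ℝ) → Fin 6 → Fin 6 → ℝ :=
  fun x μ ν =>
    let A := a31 * x 0 + a33 * x 2
    let B := b52 * x 1 + b55 * x 4
    let C := d64 * x 3 + d66 * x 5
    !![0, 0, A, 0, 0, 0;
       0, 0, 0, 0, B, 0;
       -A, 0, 0, 0, 0, 0;
       0, 0, 0, 0, 0, C;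
       0, -B, 0, 0, 0, 0;
       0, 0, 0, -C, 0, 0] μ ν

section Bivector

variable {m : ℕ}

theorem pd_eq_zero_of_dependsOn {f : (Fin m → ℝ) → ℝ} {s : Set (Fin m)} (hf : DependsOn f s)
    {ρ : Fin m} (hρ : ρ ∉ s) (x : Fin m → ℝ) : pd ρ f x = 0 := by
  by_cases hdiff : DifferentiableAt ℝ f x
  · have hline : (fun t : ℝ => f (x + t • Pi.single ρ 1)) = fun _ => f x := by
      funext t
      refine hf fun i hi => ?_
      have hiρ : i ≠ ρ := fun h => hρ (h ▸ hi)
      simp [hiρ]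
    rw [pd, ← hdiff.lineDeriv_eq_fderiv, lineDeriv, hline, deriv_const]
  · rw [pd, fderiv_zero_of_not_differentiableAt hdiff, zero_apply]

theorem sum_sum_mul_eq_zero_of_skew {ι : Type*} [Fintype ι] {A S : ι → ι → ℝ}
    (hA : ∀ i j, A j i = -A i j) (hS : ∀ i j, A i j ≠ 0 → S j i = S i j) :
    ∑ i, ∑ j, A i j * S i j = 0 := by
  have hterm : ∀ i j, A j i * S j i = -(A i j * S i j) := fun i j => by
    by_cases h : A i j = 0
    · rw [hA i j, h]
      ring
    · rw [hA, hS i j h, neg_mul]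
  have hneg : ∑ i, ∑ j, A i j * S i j = -∑ i, ∑ j, A i j * S i j :=
    calc ∑ i, ∑ j, A i j * S i j = ∑ i, ∑ j, A j i * S j i := Finset.sum_comm
      _ = ∑ i, ∑ j, -(A i j * S i j) :=
        Finset.sum_congr rfl fun i _ => Finset.sum_congr rfl fun j _ => hterm i j
      _ = -∑ i, ∑ j, A i j * S i j := by simp only [Finset.sum_neg_distrib]
  linarith

structure IsBlockSkew {κ : Type*} (b : Fin m → κ) (M : Fin m → Fin m → ℝ) : Prop where
  skew : ∀ μ ν, M ν μ = -M μ ν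
  eq_zero_of_ne : ∀ μ ν, b μ ≠ b ν → M μ ν = 0

variable {κ : Type*} {b : Fin m → κ}

theorem pd_sum_comp [Fintype κ] {U : κ → (Fin m → ℝ) → ℝ} (hU : ∀ k, Differentiable ℝ (U k))
    (hUdep : ∀ k, DependsOn (U k) {i | b i = k}) {φ : ℝ → ℝ} (hφ : Differentiable ℝ φ)
    (μ : Fin m) (x : Fin m → ℝ) :
    pd μ (fun y => ∑ k, φ (U k y)) x = deriv φ (U (b μ) x) * pd μ (U (b μ)) x := by
  have hderiv : HasFDerivAt (fun y => ∑ k, φ (U k y))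
      (∑ k, deriv φ (U k x) • fderiv ℝ (U k) x) x :=
    HasFDerivAt.fun_sum fun k _ => (hφ _).hasDerivAt.comp_hasFDerivAt x (hU k x).hasFDerivAt
  rw [pd, hderiv.fderiv, _root_.sum_apply, Finset.sum_eq_single (b μ)]
  · rfl
  · intro k _ hk
    exact mul_eq_zero_of_right _ (pd_eq_zero_of_dependsOn (hUdep k) (Ne.symm hk) x)
  · simp

theorem pbrk_sum_comp_eq_zero [Fintype κ] {P : (Fin m → ℝ) → Fin m → Fin m → ℝ}
    {x : Fin m → ℝ} (hP : IsBlockSkew b (P x)) {U : κ → (Fin m → ℝ) → ℝ}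
    (hU : ∀ k, Differentiable ℝ (U k)) (hUdep : ∀ k, DependsOn (U k) {i | b i = k})
    {φ ψ : ℝ → ℝ} (hφ : Differentiable ℝ φ) (hψ : Differentiable ℝ ψ) :
    pbrk P (fun y => ∑ k, φ (U k y)) (fun y => ∑ k, ψ (U k y)) x = 0 := by
  simp only [pbrk, pd_sum_comp hU hUdep hφ, pd_sum_comp hU hUdep hψ, mul_assoc]
  refine sum_sum_mul_eq_zero_of_skew hP.skew fun μ ν hμν => ?_
  have hb : b μ = b ν := by_contra (hμν ∘ hP.eq_zero_of_ne μ ν)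
  rw [hb]
  ring

end Bivector

section Schouten

variable {m : ℕ} {κ : Type*} {b : Fin m → κ} {P Q : (Fin m → ℝ) → Fin m → Fin m → ℝ}

theorem pd_swap (hP : ∀ x μ ν, P x ν μ = -P x μ ν) (ρ μ ν : Fin m) (x : Fin m → ℝ) :
    pd ρ (fun y => P y ν μ) x = -pd ρ (fun y => P y μ ν) x := by
  simp only [pd, fun y => hP y μ ν, fderiv_fun_neg, neg_apply]

theorem pd_diag (hP : ∀ x μ ν, P x ν μ = -P x μ ν) (ρ μ : Fin m) (x : Fin m → ℝ) :
    pd ρ (fun y => P y μ μ) x = 0 := by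
  linarith [pd_swap hP ρ μ μ x]

theorem mul_pd_eq_zero_of_not_sameBlock {R S : (Fin m → ℝ) → Fin m → Fin m → ℝ}
    {x : Fin m → ℝ} (hR : ∀ μ ν, b μ ≠ b ν → R x μ ν = 0)
    (hS : ∀ x μ ν, b μ ≠ b ν → S x μ ν = 0)
    (hSdep : ∀ μ ν, DependsOn (fun y => S y μ ν) {i | b i = b μ}) {l μ ν : Fin m}
    (h : ¬(b l = b μ ∧ b μ = b ν)) (ρ : Fin m) :
    R x ρ l * pd ρ (fun y => S y μ ν) x = 0 := by
  by_cases hρl : b ρ = b l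
  · by_cases hρμ : b ρ = b μ
    · have hμν : b μ ≠ b ν := fun h' => h ⟨hρl ▸ hρμ, h'⟩
      have hzero : (fun y => S y μ ν) = fun _ => 0 :=
        funext fun y => hS y μ ν hμν
      simp [hzero, pd]
    · rw [pd_eq_zero_of_dependsOn (hSdep μ ν) hρμ, mul_zero]
  · rw [hR ρ l hρl, zero_mul]

theorem schoutenMixed_eq_zero
    (hb : ∀ i j k, b i = b j → b j = b k → i = j ∨ j = k ∨ k = i)
    (hP : ∀ x, IsBlockSkew b (P x)) (hPdep : ∀ μ ν, DependsOn (fun y => P y μ ν) {i | b i = b μ})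
    (hQ : ∀ x, IsBlockSkew b (Q x)) (hQdep : ∀ μ ν, DependsOn (fun y => Q y μ ν) {i | b i = b μ})
    (x : Fin m → ℝ) (l μ ν : Fin m) : schoutenMixed P Q l μ ν x = 0 := by
  have hPskew x := (hP x).skew
  have hQskew x := (hQ x).skew
  have hPdiag x := (hP x).eq_zero_of_ne
  have hQdiag x := (hQ x).eq_zero_of_ne
  unfold schoutenMixed
  refine Finset.sum_eq_zero fun ρ _ => ?_
  by_cases hlμ : l = μ
  · subst hlμ
    rw [pd_swap hPskew ρ ν l, pd_swap hQskew ρ ν l, pd_diag hPskew, pd_diag hQskew]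
    ring
  by_cases hμν : μ = ν
  · subst hμν
    rw [pd_swap hPskew ρ l μ, pd_swap hQskew ρ l μ, pd_diag hPskew, pd_diag hQskew]
    ring
  by_cases hνl : ν = l
  · subst hνl
    rw [pd_swap hPskew ρ μ ν, pd_swap hQskew ρ μ ν, pd_diag hPskew, pd_diag hQskew]
    ring
  have hlμν : ¬(b l = b μ ∧ b μ = b ν) := fun ⟨h₁, h₂⟩ => by
    rcases hb l μ ν h₁ h₂ with h | h | h <;> contradiction
  have hνlμ : ¬(b ν = b l ∧ b l = b μ) := fun ⟨h₁, h₂⟩ => hlμν ⟨h₂, (h₁.trans h₂).symm⟩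
  have hμνl : ¬(b μ = b ν ∧ b ν = b l) := fun ⟨h₁, h₂⟩ => hlμν ⟨(h₁.trans h₂).symm, h₁⟩
  rw [mul_pd_eq_zero_of_not_sameBlock (hPdiag x) hQdiag hQdep hlμν,
    mul_pd_eq_zero_of_not_sameBlock (hQdiag x) hPdiag hPdep hlμν,
    mul_pd_eq_zero_of_not_sameBlock (hPdiag x) hQdiag hQdep hνlμ,
    mul_pd_eq_zero_of_not_sameBlock (hQdiag x) hPdiag hPdep hνlμ,
    mul_pd_eq_zero_of_not_sameBlock (hPdiag x) hQdiag hQdep hμνl,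
    mul_pd_eq_zero_of_not_sameBlock (hQdiag x) hPdiag hPdep hμνl]
  ring

theorem schoutenMixed_self (l μ ν : Fin m) (x : Fin m → ℝ) :
    schoutenMixed P P l μ ν x = 2 * schouten P l μ ν x := by
  simp only [schoutenMixed, schouten, Finset.mul_sum]
  exact Finset.sum_congr rfl fun ρ _ => by ring

theorem schouten_eq_zero (hb : ∀ i j k, b i = b j → b j = b k → i = j ∨ j = k ∨ k = i)
    (hP : ∀ x, IsBlockSkew b (P x)) (hPdep : ∀ μ ν, DependsOn (fun y => P y μ ν) {i | b i = b μ})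
    (x : Fin m → ℝ) (l μ ν : Fin m) : schouten P l μ ν x = 0 := by
  linarith [schoutenMixed_self (P := P) l μ ν x, schoutenMixed_eq_zero hb hP hPdep hP hPdep x l μ ν]

end Schouten

-- indices start at 0: the blocks are `{0, 2}`, `{1, 4}`, `{3, 5}`
def block624 : Fin 6 → Fin 3 := ![0, 1, 0, 2, 1, 2]

theorem block624_fiber (i j k : Fin 6) :
    block624 i = block624 j → block624 j = block624 k → i = j ∨ j = k ∨ k = i := by
  revert i j k
  decide

theorem isBlockSkew_P624 (p13 p25 p46 : ℝ) (x : Fin 6 → ℝ) :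
    IsBlockSkew block624 (P624 p13 p25 p46 x) where
  skew μ ν := by fin_cases μ <;> fin_cases ν <;> simp [P624]
  eq_zero_of_ne μ ν := by fin_cases μ <;> fin_cases ν <;> simp [P624, block624]

theorem isBlockSkew_P624' (a31 a33 b52 b55 d64 d66 : ℝ) (x : Fin 6 → ℝ) :
    IsBlockSkew block624 (P624' a31 a33 b52 b55 d64 d66 x) where
  skew μ ν := by fin_cases μ <;> fin_cases ν <;> simp [P624']
  eq_zero_of_ne μ ν := by fin_cases μ <;> fin_cases ν <;> simp [P624', block624]

theorem dependsOn_P624 (p13 p25 p46 : ℝ) (μ ν : Fin 6) (s : Set (Fin 6)) :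
    DependsOn (fun y => P624 p13 p25 p46 y μ ν) s :=
  fun _ _ _ => rfl

theorem dependsOn_P624' (a31 a33 b52 b55 d64 d66 : ℝ) (μ ν : Fin 6) :
    DependsOn (fun y => P624' a31 a33 b52 b55 d64 d66 y μ ν) {i | block624 i = block624 μ} := by
  intro x y h
  fin_cases μ <;> fin_cases ν <;> simp [Fin.forall_fin_succ, block624] at h <;> simp [P624', h]

noncomputable def coord624 (a31 a33 b52 b55 d64 d66 p13 p25 p46 : ℝ) : Fin 3 → (Fin 6 → ℝ) → ℝ :=
  ![fun x => (a31 * x 0 + a33 * x 2) / p13,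
    fun x => (b52 * x 1 + b55 * x 4) / p25,
    fun x => (d64 * x 3 + d66 * x 5) / p46]

theorem differentiable_coord624 (a31 a33 b52 b55 d64 d66 p13 p25 p46 : ℝ) (k : Fin 3) :
    Differentiable ℝ (coord624 a31 a33 b52 b55 d64 d66 p13 p25 p46 k) := by
  fin_cases k <;> simp [coord624] <;> fun_prop

theorem dependsOn_coord624 (a31 a33 b52 b55 d64 d66 p13 p25 p46 : ℝ) (k : Fin 3) :
    DependsOn (coord624 a31 a33 b52 b55 d64 d66 p13 p25 p46 k) {i | block624 i = k} := by
  intro x y h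
  fin_cases k <;> simp [Fin.forall_fin_succ, block624] at h <;> simp [coord624, h]

theorem A624_compatible_and_involution (p13 p25 p46 a31 a33 b52 b55 d64 d66 : ℝ) :
    ((∀ x l μ ν, schouten (P624 p13 p25 p46) l μ ν x = 0) ∧
     (∀ x l μ ν, schouten (P624' a31 a33 b52 b55 d64 d66) l μ ν x = 0) ∧
     (∀ x l μ ν, schoutenMixed (P624 p13 p25 p46)
        (P624' a31 a33 b52 b55 d64 d66) l μ ν x = 0)) ∧
    (p13 * p25 * p46 ≠ 0 →
      let u : (Fin 6 → ℝ) → ℝ := fun x => (a31 * x 0 + a33 * x 2) / p13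
      let v : (Fin 6 → ℝ) → ℝ := fun x => (b52 * x 1 + b55 * x 4) / p25
      let w : (Fin 6 → ℝ) → ℝ := fun x => (d64 * x 3 + d66 * x 5) / p46
      let H : Fin 3 → (Fin 6 → ℝ) → ℝ :=
        ![fun x => u x + v x + w x,
          fun x => ((u x) ^ 2 + (v x) ^ 2 + (w x) ^ 2) / 2,
          fun x => ((u x) ^ 3 + (v x) ^ 3 + (w x) ^ 3) / 3]
      ∀ i j : Fin 3, ∀ x,
        pbrk (P624 p13 p25 p46) (H i) (H j) x = 0 ∧
        pbrk (P624' a31 a33 b52 b55 d64 d66) (H i) (H j) x = 0) := by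
  have hP := isBlockSkew_P624 p13 p25 p46
  have hP' := isBlockSkew_P624' a31 a33 b52 b55 d64 d66
  have hPdep := fun μ ν => dependsOn_P624 p13 p25 p46 μ ν {i | block624 i = block624 μ}
  have hP'dep := dependsOn_P624' a31 a33 b52 b55 d64 d66
  refine ⟨⟨schouten_eq_zero block624_fiber hP hPdep,
    schouten_eq_zero block624_fiber hP' hP'dep,
    schoutenMixed_eq_zero block624_fiber hP hPdep hP' hP'dep⟩, ?_⟩
  intro _ u v w H i j x
  set U := coord624 a31 a33 b52 b55 d64 d66 p13 p25 p46 with hU_def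
  have hH (n : Fin 3) : H n = fun y => ∑ k, U k y ^ (n.val + 1) / (n.val + 1) := by
    fin_cases n <;> funext y <;> simp [H, u, v, w, hU_def, coord624, Fin.sum_univ_three] <;> ring
  have hpow (n : Fin 3) : Differentiable ℝ fun t : ℝ => t ^ (n.val + 1) / (n.val + 1) := by
    fun_prop
  have hU := differentiable_coord624 a31 a33 b52 b55 d64 d66 p13 p25 p46
  have hUdep := dependsOn_coord624 a31 a33 b52 b55 d64 d66 p13 p25 p46
  rw [hH i, hH j]
  have hbrk := pbrk_sum_comp_eq_zero (hP x) hU hUdep (hpow i) (hpow j)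
  have hbrk' := pbrk_sum_comp_eq_zero (hP' x) hU hUdep (hpow i) (hpow j)
  exact ⟨hbrk, hbrk'⟩
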